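/- arXiv:2402.02133 — 4 statements merged into one kernel-verified Lean document; each statement's English description precedes it below -/
import Mathlib

section
/- If ξ_1, ξ_2, … are i.i.d. real random variables with mean 0 and finite 2k-th moment, then for every ε > 0, P(|Σ_{i=1}^N ξ_i / N| > ε) = O(N^{-k}) as N → ∞. -/
/-!
Expand `E[(ξ_1 + ⋯ + ξ_N)^{2k}]` into `N^{2k}` terms `E[ξ_{p 1} ⋯ ξ_{p (2k)}]`. By independence each
term factors into moments of the individual `ξ_b`, so it vanishes as soon as some index occurs
exactly once (the mean is zero), and otherwise it is bounded by `M^{2k}`, where `M` bounds the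
moments of order at most `2k`. The surviving tuples use at most `k` distinct indices, and there are
at most `k^{2k} N^k` of them. Hence `E[S_N^{2k}] = O(N^k)`, and Markov's inequality for
`|S_N|^{2k}` gives `P(|S_N| > εN) = O(N^k / N^{2k})`.
-/

open MeasureTheory ProbabilityTheory Finset

/-- A tuple with at most `k` distinct entries factors through `Fin k`. -/
theorem Finset.card_filter_card_image_le {α : Type*} [DecidableEq α] (s : Finset α)
    {m k : ℕ} (hkm : k ≤ m) :
    #{p ∈ Fintype.piFinset (fun _ : Fin m => s) | #(univ.image p) ≤ k} ≤ k ^ m * #s ^ k := by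
  calc #{p ∈ Fintype.piFinset (fun _ : Fin m => s) | #(univ.image p) ≤ k}
      ≤ #((univ : Finset (Fin m → Fin k)) ×ˢ Fintype.piFinset (fun _ : Fin k => s)) := by
        refine card_le_card_of_surjOn (fun q => q.2 ∘ q.1) ?_
        intro p hp
        simp only [coe_filter, Fintype.mem_piFinset, Set.mem_ofPred_eq] at hp
        obtain ⟨hps, hpk⟩ := hp
        set t := univ.image p
        have hpt : ∀ i, p i ∈ t := fun i => mem_image_of_mem p (mem_univ i)
        let g : Fin k → α := fun j =>
          if hj : (j : ℕ) < #t then (t.equivFin.symm ⟨j, hj⟩ : α) else p ⟨0, by omega⟩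
        refine ⟨(fun i => Fin.castLE hpk (t.equivFin ⟨p i, hpt i⟩), g), ?_, ?_⟩
        · simp only [coe_product, coe_univ, Set.mem_prod, Set.mem_univ, true_and,
            Fintype.coe_piFinset, Set.mem_pi, mem_coe]
          intro j _
          simp only [g]
          split_ifs with hj
          · obtain ⟨i, -, hi⟩ := mem_image.mp (t.equivFin.symm ⟨j, hj⟩).2
            rw [← hi]; exact hps i
          · exact hps _
        · funext i
          simp [g]
    _ = k ^ m * #s ^ k := by simp

theorem Finset.two_mul_card_image_le_of_fiber_ne_one {ι : Type*} [DecidableEq ι] {m : ℕ}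
    (p : Fin m → ι) (hp : ∀ b ∈ univ.image p, #{t | p t = b} ≠ 1) :
    2 * #(univ.image p) ≤ m := by
  have hfiber : ∀ b ∈ univ.image p, 2 ≤ #{t | p t = b} := by
    intro b hb
    obtain ⟨t, -, rfl⟩ := mem_image.mp hb
    have : 0 < #{s | p s = p t} := card_pos.mpr ⟨t, by simp⟩
    have := hp _ hb
    omega
  calc 2 * #(univ.image p) = ∑ _b ∈ univ.image p, 2 := by simp [mul_comm]
    _ ≤ ∑ b ∈ univ.image p, #{t | p t = b} := sum_le_sum hfiber
    _ = m := by
      rw [← card_eq_sum_card_image]; simp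

section Moments

variable {Ω ι : Type*} {mΩ : MeasurableSpace Ω} {μ : Measure Ω}

theorem integrable_fun_prod_of_memLp [IsFiniteMeasure μ] {m : ℕ} {f : Fin m → Ω → ℝ}
    (hf : ∀ t, MemLp (f t) m μ) : Integrable (fun ω => ∏ t, f t ω) μ := by
  have h := MemLp.prod' (s := univ) (p := fun _ => (m : ENNReal)) fun t _ => hf t
  refine memLp_one_iff_integrable.mp (h.mono_exponent ?_)
  rcases Nat.eq_zero_or_pos m with rfl | hm
  · simp
  · simp [ENNReal.mul_inv_cancel, hm.ne']

theorem memLp_of_integrable_abs_pow {f : Ω → ℝ} {n : ℕ} (hf : AEStronglyMeasurable f μ)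
    (hint : Integrable (fun ω => |f ω| ^ n) μ) : MemLp f n μ := by
  rcases Nat.eq_zero_or_pos n with rfl | hn
  · simpa using hf
  · rw [← integrable_norm_rpow_iff hf (by simpa using hn.ne') (by simp)]
    simpa using hint

theorem integral_prod_eq_prod_integral_pow_fiber [DecidableEq ι] {ξ : ι → Ω → ℝ}
    (hindep : iIndepFun ξ μ) (hmeas : ∀ i, AEStronglyMeasurable (ξ i) μ) {m : ℕ} (p : Fin m → ι) :
    ∫ ω, ∏ t, ξ (p t) ω ∂μ = ∏ b ∈ univ.image p, ∫ ω, ξ b ω ^ #{t | p t = b} ∂μ := by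
  set S := univ.image p
  let c : ι → ℕ := fun b => #{t | p t = b}
  have hsub : iIndepFun (fun (b : S) ω => ξ b ω ^ c b) μ :=
    (hindep.precomp Subtype.val_injective).comp (fun (b : S) (x : ℝ) => x ^ c b)
      fun _ => measurable_id.pow_const _
  have h := hsub.integral_fun_prod_eq_prod_integral fun b => (hmeas b).pow _
  rw [prod_coe_sort S (fun b => ∫ ω, ξ b ω ^ c b ∂μ)] at h
  rw [← h]
  congr with ω
  rw [prod_coe_sort S (fun b => ξ b ω ^ c b)]
  exact prod_comp (fun b => ξ b ω) p

theorem abs_integral_prod_le [DecidableEq ι] {ξ : ι → Ω → ℝ} (hindep : iIndepFun ξ μ)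
    (hmeas : ∀ i, AEStronglyMeasurable (ξ i) μ) {m : ℕ} {M : ℝ} (hM1 : 1 ≤ M)
    (hM : ∀ i, ∀ c ≤ m, |∫ ω, ξ i ω ^ c ∂μ| ≤ M) (p : Fin m → ι) :
    |∫ ω, ∏ t, ξ (p t) ω ∂μ| ≤ M ^ m := by
  rw [integral_prod_eq_prod_integral_pow_fiber hindep hmeas, abs_prod]
  calc ∏ b ∈ univ.image p, |∫ ω, ξ b ω ^ #{t | p t = b} ∂μ|
      ≤ ∏ _b ∈ univ.image p, M :=
        prod_le_prod (fun _ _ => abs_nonneg _) fun b _ =>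
          hM b _ (card_filter_le _ _ |>.trans_eq (by simp))
    _ = M ^ #(univ.image p) := prod_const M
    _ ≤ M ^ m := pow_le_pow_right₀ hM1 (card_image_le.trans_eq (by simp))

theorem integral_prod_eq_zero_of_fiber_eq_one [DecidableEq ι] {ξ : ι → Ω → ℝ}
    (hindep : iIndepFun ξ μ) (hmeas : ∀ i, AEStronglyMeasurable (ξ i) μ)
    (hmean : ∀ i, ∫ ω, ξ i ω ∂μ = 0) {m : ℕ} (p : Fin m → ι) {b : ι} (hb : b ∈ univ.image p)
    (hb1 : #{t | p t = b} = 1) :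
    ∫ ω, ∏ t, ξ (p t) ω ∂μ = 0 := by
  rw [integral_prod_eq_prod_integral_pow_fiber hindep hmeas]
  exact prod_eq_zero hb (by simp [hb1, hmean])

theorem integral_sum_pow_le [DecidableEq ι] {ξ : ι → Ω → ℝ} (hindep : iIndepFun ξ μ)
    {k : ℕ} (hLp : ∀ i, MemLp (ξ i) (2 * k : ℕ) μ) (hmean : ∀ i, ∫ ω, ξ i ω ∂μ = 0)
    {M : ℝ} (hM1 : 1 ≤ M) (hM : ∀ i, ∀ c ≤ 2 * k, |∫ ω, ξ i ω ^ c ∂μ| ≤ M) (s : Finset ι) :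
    ∫ ω, (∑ i ∈ s, ξ i ω) ^ (2 * k) ∂μ ≤ k ^ (2 * k) * #s ^ k * M ^ (2 * k) := by
  have := hindep.isProbabilityMeasure
  have hmeas : ∀ i, AEStronglyMeasurable (ξ i) μ := fun i => (hLp i).1
  set A := Fintype.piFinset fun _ : Fin (2 * k) => s
  have hterm : ∀ p : Fin (2 * k) → ι, ∫ ω, ∏ t, ξ (p t) ω ∂μ
      ≤ if #(univ.image p) ≤ k then M ^ (2 * k) else 0 := by
    intro p
    split_ifs with hp
    · exact le_of_abs_le (abs_integral_prod_le hindep hmeas hM1 hM p)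
    · obtain ⟨b, hb, hb1⟩ : ∃ b ∈ univ.image p, #{t | p t = b} = 1 := by
        by_contra! h
        have := two_mul_card_image_le_of_fiber_ne_one p h
        omega
      exact (integral_prod_eq_zero_of_fiber_eq_one hindep hmeas hmean p hb hb1).le
  simp_rw [sum_pow']
  rw [integral_finsetSum _ fun p _ => integrable_fun_prod_of_memLp fun t => hLp (p t)]
  calc ∑ p ∈ A, ∫ ω, ∏ t, ξ (p t) ω ∂μ
      ≤ ∑ p ∈ A, if #(univ.image p) ≤ k then M ^ (2 * k) else 0 := sum_le_sum fun p _ => hterm p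
    _ = #{p ∈ A | #(univ.image p) ≤ k} * M ^ (2 * k) := by rw [← sum_filter]; simp
    _ ≤ ((k ^ (2 * k) * #s ^ k : ℕ) : ℝ) * M ^ (2 * k) := by
        gcongr
        exact_mod_cast card_filter_card_image_le s (by omega)
    _ = k ^ (2 * k) * #s ^ k * M ^ (2 * k) := by push_cast; ring

theorem measureReal_lt_abs_le_integral_abs_pow_div [IsFiniteMeasure μ] {X : Ω → ℝ} {n : ℕ}
    (hX : Integrable (fun ω => |X ω| ^ n) μ) {ε : ℝ} (hε : 0 < ε) :
    μ.real {ω | ε < |X ω|} ≤ (∫ ω, |X ω| ^ n ∂μ) / ε ^ n := by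
  rw [le_div_iff₀ (by positivity), mul_comm]
  calc ε ^ n * μ.real {ω | ε < |X ω|} ≤ ε ^ n * μ.real {ω | ε ^ n ≤ |X ω| ^ n} :=
        mul_le_mul_of_nonneg_left
          (measureReal_mono fun ω (hω : ε < |X ω|) => pow_le_pow_left₀ hε.le hω.le n)
          (by positivity)
    _ ≤ ∫ ω, |X ω| ^ n ∂μ :=
        mul_meas_ge_le_integral_of_nonneg (ae_of_all _ fun ω => by positivity) hX _

theorem abs_integral_pow_le_sum_of_identDistrib {X Y : Ω → ℝ} (h : IdentDistrib X Y μ μ)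
    {c n : ℕ} (hc : c ≤ n) :
    |∫ ω, X ω ^ c ∂μ| ≤ ∑ j ∈ range (n + 1), |∫ ω, Y ω ^ j ∂μ| := by
  calc |∫ ω, X ω ^ c ∂μ| = |∫ ω, Y ω ^ c ∂μ| :=
        congrArg abs (h.comp (u := fun x : ℝ => x ^ c) (by fun_prop)).integral_eq
    _ ≤ _ := single_le_sum (f := fun j => |∫ ω, Y ω ^ j ∂μ|) (fun _ _ => abs_nonneg _)
        (mem_range.mpr (by omega))

end Moments

theorem stmt2_general {Ω : Type*} [MeasureSpace Ω] [IsProbabilityMeasure (ℙ : Measure Ω)]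
    (ξ : ℕ → Ω → ℝ) (k : ℕ)
    (hmeas : ∀ i, Measurable (ξ i))
    (hindep : iIndepFun ξ ℙ)
    (hident : ∀ i, Measure.map (ξ i) ℙ = Measure.map (ξ 0) ℙ)
    (hmean : ∫ ω, ξ 0 ω ∂ℙ = 0)
    (hmom : Integrable (fun ω => |ξ 0 ω| ^ (2 * k)) ℙ)
    (ε : ℝ) (hε : 0 < ε) :
    ∃ C : ℝ, ∀ N : ℕ, 1 ≤ N →
      (ℙ {ω | ε < |(∑ i ∈ Finset.range N, ξ i ω) / N|}).toReal ≤ C / (N : ℝ) ^ k := by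
  have hid : ∀ i, IdentDistrib (ξ i) (ξ 0) :=
    fun i => ⟨(hmeas i).aemeasurable, (hmeas 0).aemeasurable, hident i⟩
  have hLp : ∀ i, MemLp (ξ i) (2 * k : ℕ) :=
    fun i => (hid i).memLp_iff.mpr (memLp_of_integrable_abs_pow (hmeas 0).aestronglyMeasurable hmom)
  set M := 1 + ∑ c ∈ range (2 * k + 1), |∫ ω, ξ 0 ω ^ c|
  have hM : ∀ i, ∀ c ≤ 2 * k, |∫ ω, ξ i ω ^ c| ≤ M := fun i c hc =>
    le_add_of_nonneg_of_le zero_le_one (abs_integral_pow_le_sum_of_identDistrib (hid i) hc)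
  have hM1 : 1 ≤ M := le_add_of_nonneg_right (sum_nonneg fun _ _ => abs_nonneg _)
  refine ⟨k ^ (2 * k) * M ^ (2 * k) / ε ^ (2 * k), fun N hN => ?_⟩
  set S := fun ω => ∑ i ∈ range N, ξ i ω
  have hNpos : (0 : ℝ) < N := by exact_mod_cast hN
  have hSint : Integrable (fun ω => |S ω| ^ (2 * k)) := by
    simpa only [Real.norm_eq_abs] using (memLp_finsetSum _ fun i _ => hLp i).integrable_norm_pow'
  calc (ℙ {ω | ε < |S ω / N|}).toReal = (ℙ : Measure Ω).real {ω | ε * N < |S ω|} := by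
        simp_rw [abs_div, Nat.abs_cast, lt_div_iff₀ hNpos, measureReal_def]
    _ ≤ (∫ ω, |S ω| ^ (2 * k)) / (ε * N) ^ (2 * k) :=
        measureReal_lt_abs_le_integral_abs_pow_div hSint (mul_pos hε hNpos)
    _ ≤ (k ^ (2 * k) * N ^ k * M ^ (2 * k)) / (ε * N) ^ (2 * k) := by
        simp_rw [(even_two_mul k).pow_abs]
        gcongr
        simpa using integral_sum_pow_le hindep hLp (fun i => (hid i).integral_eq.trans hmean) hM1 hM
          (range N)
    _ = k ^ (2 * k) * M ^ (2 * k) / ε ^ (2 * k) / N ^ k := by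
        rw [mul_pow, two_mul, pow_add (N : ℝ)]
        field_simp

/-- For i.i.d. centered real random variables with finite 2k-th moment,
P(|Σ_{i<N} ξ_i / N| > ε) = O(N^{-k}). -/
theorem stmt2 {Ω : Type*} [MeasureSpace Ω] [IsProbabilityMeasure (ℙ : Measure Ω)]
    (ξ : ℕ → Ω → ℝ) (k : ℕ) (hk : 0 < k)
    (hmeas : ∀ i, Measurable (ξ i))
    (hindep : iIndepFun ξ ℙ)
    (hident : ∀ i, Measure.map (ξ i) ℙ = Measure.map (ξ 0) ℙ)
    (hmean : ∫ ω, ξ 0 ω ∂ℙ = 0)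
    (hmom : Integrable (fun ω => |ξ 0 ω| ^ (2 * k)) ℙ)
    (ε : ℝ) (hε : 0 < ε) :
    ∃ C : ℝ, ∀ N : ℕ, 1 ≤ N →
      (ℙ {ω | ε < |(∑ i ∈ Finset.range N, ξ i ω) / N|}).toReal ≤ C / (N : ℝ) ^ k :=
  stmt2_general ξ k hmeas hindep hident hmean hmom ε hε
end

section
/- Let y > 0. The cubic polynomial in z given by 1 - 3y + 3y² - y³ + (3y + 21y² + 3y³)z + (3y² - 3y³)z² + y³ z³ has exactly one real root, namely z = (y^{1/3} - 1)³ / y; its other two roots form the complex conjugate pair z = (3y^{2/3} - 3y^{1/3} + 2y - 2)/(2y) ± i·3√3(y^{1/3}+1)/(2y^{2/3}), which have nonzero imaginary part. -/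
/-! Write `y = c³` with `c = y^{1/3} > 0`. Then the cubic factors as
`y³ (z - (c - 1)³ / y) (z - b - t) (z - b + t)` for any `t` with `t² = -27 (c + 1)² / (4 c⁴)`,
an identity in `c`, `t`, `z` alone; over `ℂ` such a `t` is `i` times the stated real `m ≠ 0`. -/

section CubicFactorization

variable {K : Type*} [Field K]

theorem cubic_eq_factor (h2 : (2 : K) ≠ 0) {c y t : K} (hc : c ≠ 0) (hy : y = c ^ 3)
    (ht : 4 * c ^ 4 * t ^ 2 = -27 * (c + 1) ^ 2) (z : K) :
    1 - 3 * y + 3 * y ^ 2 - y ^ 3 + (3 * y + 21 * y ^ 2 + 3 * y ^ 3) * z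
        + (3 * y ^ 2 - 3 * y ^ 3) * z ^ 2 + y ^ 3 * z ^ 3 =
      y ^ 3 * (z - (c - 1) ^ 3 / y)
        * (z - ((3 * c ^ 2 - 3 * c + 2 * y - 2) / (2 * y) + t))
        * (z - ((3 * c ^ 2 - 3 * c + 2 * y - 2) / (2 * y) - t)) := by
  subst hy
  field_simp
  linear_combination (c ^ 2 * (c ^ 3 * z - (c - 1) ^ 3)) * ht

theorem cubic_eq_zero_iff (h2 : (2 : K) ≠ 0) {c y t : K} (hc : c ≠ 0) (hy : y = c ^ 3)
    (ht : 4 * c ^ 4 * t ^ 2 = -27 * (c + 1) ^ 2) (z : K) :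
    1 - 3 * y + 3 * y ^ 2 - y ^ 3 + (3 * y + 21 * y ^ 2 + 3 * y ^ 3) * z
        + (3 * y ^ 2 - 3 * y ^ 3) * z ^ 2 + y ^ 3 * z ^ 3 = 0 ↔
      z = (c - 1) ^ 3 / y ∨ z = (3 * c ^ 2 - 3 * c + 2 * y - 2) / (2 * y) + t ∨
        z = (3 * c ^ 2 - 3 * c + 2 * y - 2) / (2 * y) - t := by
  have hy3 : y ^ 3 ≠ 0 := by subst hy; positivity
  simp only [cubic_eq_factor h2 hc hy ht, mul_eq_zero, hy3, sub_eq_zero, false_or, or_assoc]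

end CubicFactorization

/-- The discriminant cubic has exactly one real root z = (y^{1/3}-1)³/y and a pair of
complex conjugate roots with nonzero imaginary part. -/
theorem stmt9 (y : ℝ) (hy : 0 < y) :
    ∃ im2 : ℝ, im2 = 3 * Real.sqrt 3 * (y ^ ((1 : ℝ) / 3) + 1) / (2 * y ^ ((2 : ℝ) / 3)) ∧
      im2 ≠ 0 ∧
      ∀ z : ℂ,
        ((1 - 3 * y + 3 * y ^ 2 - y ^ 3 : ℝ) : ℂ)
            + ((3 * y + 21 * y ^ 2 + 3 * y ^ 3 : ℝ) : ℂ) * z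
            + ((3 * y ^ 2 - 3 * y ^ 3 : ℝ) : ℂ) * z ^ 2 + ((y ^ 3 : ℝ) : ℂ) * z ^ 3 = 0 ↔
          z = (((y ^ ((1 : ℝ) / 3) - 1) ^ 3 / y : ℝ) : ℂ) ∨
          z = (((3 * y ^ ((2 : ℝ) / 3) - 3 * y ^ ((1 : ℝ) / 3) + 2 * y - 2) / (2 * y) : ℝ) : ℂ)
              + Complex.I * (im2 : ℂ) ∨
          z = (((3 * y ^ ((2 : ℝ) / 3) - 3 * y ^ ((1 : ℝ) / 3) + 2 * y - 2) / (2 * y) : ℝ) : ℂ)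
              - Complex.I * (im2 : ℂ) := by
  obtain ⟨c, hc, hc1, hc2, hc3⟩ : ∃ c : ℝ, 0 < c ∧ y ^ ((1 : ℝ) / 3) = c ∧
      y ^ ((2 : ℝ) / 3) = c ^ 2 ∧ y = c ^ 3 := by
    refine ⟨_, Real.rpow_pos_of_pos hy _, rfl, ?_, ?_⟩
    · rw [← Real.rpow_natCast, ← Real.rpow_mul hy.le]
      norm_num
    · rw [one_div, ← Nat.cast_ofNat, Real.rpow_inv_natCast_pow hy.le three_ne_zero]
  rw [hc1, hc2]
  refine ⟨_, rfl, by positivity, fun z => ?_⟩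
  have hc' : (c : ℂ) ≠ 0 := by exact_mod_cast hc.ne'
  have ht : 4 * (c : ℂ) ^ 4 * (Complex.I * ((3 * √3 * (c + 1) / (2 * c ^ 2) : ℝ) : ℂ)) ^ 2 =
      -27 * ((c : ℂ) + 1) ^ 2 := by
    have h3 : ((√3 : ℝ) : ℂ) ^ 2 = 3 := by exact_mod_cast Real.sq_sqrt zero_le_three
    push_cast
    rw [mul_pow, Complex.I_sq, div_pow, mul_pow, mul_pow, h3]
    field_simp
    ring
  have hy' : (y : ℂ) = (c : ℂ) ^ 3 := by exact_mod_cast hc3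
  exact_mod_cast cubic_eq_zero_iff two_ne_zero hc' hy' ht z
end

section
/- Let s(z) for z ∈ ℂ⁺ satisfy the equation 1/s(z) + z = 1/(1 + √(s(z)/y))² with y > 0 and s(z) ∈ ℂ⁺ (principal square root). Then as x → +∞ along the real axis, Im s(x + i0⁺) = (2/(√y)) x^{-5/2} + o(x^{-5/2}); consequently the corresponding spectral density ρ(x) = (1/π) Im s(x+i0⁺) satisfies lim_{x→∞} x^{5/2} ρ(x) = 2/(π√y). -/
/-!
Put `w = (s / y) ^ (1/2)` (principal branch, so `0 ≤ Re w`). Then `1 / s = (1 + w)⁻² - x` with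
`‖(1 + w)⁻²‖ ≤ 1`, hence `x s → -1`. Since `s` stays in the closed upper half-plane, where the
principal square root is continuous, `√x w = (x s / y) ^ (1/2) → i / √y`. Therefore
`√x ((1 + w)⁻² - 1) ~ -2 √x w → -2i / √y`, and the identity
`x ^ (5/2) Im s = -‖x s‖² Im (√x ((1 + w)⁻² - 1))` gives the limit `2 / √y`.
-/

open Complex Filter Topology

namespace Complex

lemma continuousOn_cpow_inv_two : ContinuousOn (· ^ (2⁻¹ : ℂ)) {z : ℂ | 0 ≤ z.im} := by
  have hcont : Continuous fun z : ℂ =>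
      (√((‖z‖ + z.re) / 2) : ℂ) + (√((‖z‖ - z.re) / 2) : ℂ) * I := by fun_prop
  refine hcont.continuousOn.congr fun z hz => ?_
  apply Complex.ext <;> simp [cpow_inv_two_re, cpow_inv_two_im_eq_sqrt hz]

lemma neg_ofReal_cpow_inv_two {c : ℝ} (hc : 0 ≤ c) : (-(c : ℂ)) ^ (2⁻¹ : ℂ) = √c * I := by
  apply Complex.ext
  · simp [cpow_inv_two_re, abs_of_nonneg hc]
  · rw [cpow_inv_two_im_eq_sqrt (by simp)]
    simp [abs_of_nonneg hc]

lemma ofReal_mul_cpow {a : ℝ} (ha : 0 < a) (z r : ℂ) :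
    ((a : ℂ) * z) ^ r = (a : ℂ) ^ r * z ^ r := by
  rcases eq_or_ne z 0 with rfl | hz
  · rcases eq_or_ne r 0 with rfl | hr
    · simp
    · simp [zero_cpow hr]
  have ha' : (a : ℂ) ≠ 0 := ofReal_ne_zero.mpr ha.ne'
  rw [cpow_def_of_ne_zero (mul_ne_zero ha' hz), log_ofReal_mul ha hz, ofReal_log ha.le,
    add_mul, exp_add, ← cpow_def_of_ne_zero ha', ← cpow_def_of_ne_zero hz]

lemma norm_inv_one_add_sq_le_one {w : ℂ} (hw : 0 ≤ w.re) : ‖((1 + w) ^ 2)⁻¹‖ ≤ 1 := by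
  have h : 1 ≤ ‖1 + w‖ := by
    calc (1 : ℝ) ≤ (1 + w).re := by simp [hw]
      _ ≤ ‖1 + w‖ := re_le_norm _
  rw [norm_inv, norm_pow]
  exact inv_le_one_of_one_le₀ (one_le_pow₀ h)

end Complex

lemma tendsto_ofReal_mul_of_inv_eq_sub {s u : ℝ → ℂ} {C : ℝ}
    (hinv : ∀ᶠ x in atTop, (s x)⁻¹ = u x - x) (hu : ∀ᶠ x in atTop, ‖u x‖ ≤ C) :
    Tendsto (fun x : ℝ => (x : ℂ) * s x) atTop (𝓝 (-1)) := by
  have hux : Tendsto (fun x : ℝ => u x / x) atTop (𝓝 0) := by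
    refine squeeze_zero_norm' (a := fun x => C / x) ?_ ?_
    · filter_upwards [hu, eventually_gt_atTop 0] with x hx hx0
      rw [norm_div, norm_real, Real.norm_of_nonneg hx0.le]
      gcongr
    · simpa [div_eq_mul_inv] using tendsto_inv_atTop_zero.const_mul C
  have hlim : Tendsto (fun x : ℝ => (u x / x - 1)⁻¹) atTop (𝓝 (-1)) := by
    simpa using (hux.sub_const 1).inv₀ (by norm_num)
  refine hlim.congr' ?_
  filter_upwards [hinv, eventually_gt_atTop 0] with x hx hx0
  have hx0' : (x : ℂ) ≠ 0 := ofReal_ne_zero.mpr hx0.ne'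
  rw [← inv_inv (s x), hx]
  field_simp

lemma tendsto_sqrt_mul_cpow_inv_two {f : ℝ → ℂ} {c : ℝ} (hc : 0 ≤ c)
    (hf : Tendsto (fun x : ℝ => (x : ℂ) * f x) atTop (𝓝 (-c)))
    (him : ∀ᶠ x in atTop, 0 ≤ (f x).im) :
    Tendsto (fun x : ℝ => (√x : ℂ) * f x ^ (2⁻¹ : ℂ)) atTop (𝓝 (√c * I)) := by
  have hmem : ∀ᶠ x : ℝ in atTop, (x : ℂ) * f x ∈ {z : ℂ | 0 ≤ z.im} := by
    filter_upwards [him, eventually_ge_atTop 0] with x hx hx0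
    simpa [im_ofReal_mul] using mul_nonneg hx0 hx
  -- `-c` lies on the branch cut, so continuity is only available from the upper half-plane.
  have hroot := ((continuousOn_cpow_inv_two _ (by simp)).tendsto.comp
    (tendsto_nhdsWithin_iff.mpr ⟨hf, hmem⟩))
  rw [Function.comp_def, neg_ofReal_cpow_inv_two hc] at hroot
  refine hroot.congr' ?_
  filter_upwards [eventually_gt_atTop 0] with x hx
  rw [ofReal_mul_cpow hx, Real.sqrt_eq_rpow, ofReal_cpow hx.le]
  norm_num

lemma tendsto_sqrt_mul_inv_one_add_sq_sub_one {w : ℝ → ℂ} {ζ : ℂ}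
    (hw : Tendsto (fun x : ℝ => (√x : ℂ) * w x) atTop (𝓝 ζ)) :
    Tendsto (fun x : ℝ => (√x : ℂ) * (((1 + w x) ^ 2)⁻¹ - 1)) atTop (𝓝 (-2 * ζ)) := by
  have hw0 : Tendsto w atTop (𝓝 0) := by
    have hsqrt_inv : Tendsto (fun x : ℝ => ((√x)⁻¹ : ℂ)) atTop (𝓝 0) := by
      simpa using (tendsto_inv_atTop_zero.comp Real.tendsto_sqrt_atTop).ofReal
    have h := hsqrt_inv.mul hw
    rw [zero_mul] at h
    refine h.congr' ?_
    filter_upwards [eventually_gt_atTop 0] with x hx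
    have : (√x : ℂ) ≠ 0 := ofReal_ne_zero.mpr (Real.sqrt_pos.mpr hx).ne'
    field_simp
  have hsq : Tendsto (fun x => (1 + w x) ^ 2) atTop (𝓝 1) := by
    simpa using ((tendsto_const_nhds (x := (1 : ℂ))).add hw0).pow 2
  have hlim : Tendsto (fun x : ℝ => -((√x : ℂ) * w x) * (2 + w x) * ((1 + w x) ^ 2)⁻¹) atTop
      (𝓝 (-2 * ζ)) := by
    simpa [mul_comm] using (hw.neg.mul (hw0.const_add 2)).mul (hsq.inv₀ one_ne_zero)
  refine hlim.congr' ?_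
  filter_upwards [hsq.eventually_ne one_ne_zero] with x hx
  have : 1 + w x ≠ 0 := fun h => hx (by simp [h])
  field_simp
  ring

lemma rpow_five_halves_mul_im_eq {x : ℝ} (hx : 0 ≤ x) {s u : ℂ} (hinv : s⁻¹ = u - x) :
    x ^ ((5 : ℝ) / 2) * s.im = -‖(x : ℂ) * s‖ ^ 2 * ((√x : ℂ) * (u - 1)).im := by
  have hu : u.im = (s⁻¹).im := by simp [hinv]
  have hpow : x ^ ((5 : ℝ) / 2) = x ^ 2 * √x := by
    rw [Real.sqrt_eq_rpow, ← Real.rpow_natCast, ← Real.rpow_add' hx (by norm_num)]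
    norm_num
  rcases eq_or_ne s 0 with rfl | hs
  · simp
  rw [im_ofReal_mul, sub_im, one_im, sub_zero, hu, inv_im, norm_mul, mul_pow, norm_real,
    Real.norm_of_nonneg hx, ← normSq_eq_norm_sq, hpow]
  have := normSq_pos.mpr hs
  field_simp

/-- Tail asymptotic of the Stieltjes transform of the Student(3) elliptic volatility
ensemble: Im s(x+i0⁺) = (2/√y) x^{-5/2} + o(x^{-5/2}), hence
lim_{x→∞} x^{5/2} ρ(x) = 2/(π√y). -/
theorem stmt11 (y : ℝ) (hy : 0 < y) (s : ℝ → ℂ)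
    (hs : ∀ x > (0 : ℝ), 0 < (s x).im)
    (heq : ∀ x > (0 : ℝ),
      1 / s x + (x : ℂ) = 1 / (1 + (s x / (y : ℂ)) ^ ((1 : ℂ) / 2)) ^ 2) :
    Filter.Tendsto (fun x : ℝ => x ^ ((5 : ℝ) / 2) * (s x).im) Filter.atTop
      (nhds (2 / Real.sqrt y)) ∧
    Filter.Tendsto (fun x : ℝ => x ^ ((5 : ℝ) / 2) * ((1 / Real.pi) * (s x).im)) Filter.atTop
      (nhds (2 / (Real.pi * Real.sqrt y))) := by
  set w : ℝ → ℂ := fun x => (s x / y) ^ (2⁻¹ : ℂ) with hw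
  have hinv : ∀ᶠ x : ℝ in atTop, (s x)⁻¹ = ((1 + w x) ^ 2)⁻¹ - x :=
    (eventually_gt_atTop 0).mono fun x hx => by
      have h := heq x hx
      simp only [one_div] at h
      simp [hw, ← h]
  have hxs : Tendsto (fun x : ℝ => (x : ℂ) * s x) atTop (𝓝 (-1)) :=
    tendsto_ofReal_mul_of_inv_eq_sub hinv (Eventually.of_forall fun x =>
      norm_inv_one_add_sq_le_one (by simp only [hw, cpow_inv_two_re]; positivity))
  have hsqrt : Tendsto (fun x : ℝ => (√x : ℂ) * w x) atTop (𝓝 (√y⁻¹ * I)) := by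
    refine tendsto_sqrt_mul_cpow_inv_two (inv_nonneg.mpr hy.le) ?_ ?_
    · simpa [div_eq_mul_inv, mul_assoc] using hxs.div_const (y : ℂ)
    · filter_upwards [eventually_gt_atTop 0] with x hx
      simpa [div_ofReal_im] using div_nonneg (hs x hx).le hy.le
  have hmain : Tendsto (fun x : ℝ => x ^ ((5 : ℝ) / 2) * (s x).im) atTop (𝓝 (2 / √y)) := by
    have hlim := (hxs.norm.pow 2).neg.mul
      ((continuous_im.tendsto _).comp (tendsto_sqrt_mul_inv_one_add_sq_sub_one hsqrt))
    rw [show -‖(-1 : ℂ)‖ ^ 2 * (-2 * (√y⁻¹ * I)).im = 2 / √y by simp [Real.sqrt_inv]; ring] at hlim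
    refine hlim.congr' ?_
    filter_upwards [hinv, eventually_ge_atTop 0] with x hx hx0
    exact (rpow_five_halves_mul_im_eq hx0 hx).symm
  refine ⟨hmain, ?_⟩
  convert hmain.const_mul Real.pi⁻¹ using 2 <;> field_simp
end

section
/- Let A, B, C be real numbers with B < 0, let w* be a real root of the resolvent cubic (2w - A)(w² - C) - B²/4 = 0, and set R⁺ = 2w* - A, R⁻ = -2w* - A. Suppose the depressed quartic s⁴ + As² + Bs + C has exactly two real roots and one pair of complex conjugate roots. Then R⁺ > 0, R⁻ + 2B/√R⁺ < 0, and the imaginary part of the root in the upper half plane equals (1/2)√(-R⁻ - 2B/√R⁺). -/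
/-- A cubic (with complex coefficients) vanishing at four distinct points is zero. -/
lemma cubic_zero4 {a b c d s1 s2 s3 s4 : ℂ}
    (h12 : s1 ≠ s2) (h13 : s1 ≠ s3) (h14 : s1 ≠ s4)
    (h23 : s2 ≠ s3) (h24 : s2 ≠ s4) (h34 : s3 ≠ s4)
    (e1 : a*s1^3 + b*s1^2 + c*s1 + d = 0)
    (e2 : a*s2^3 + b*s2^2 + c*s2 + d = 0)
    (e3 : a*s3^3 + b*s3^2 + c*s3 + d = 0)
    (e4 : a*s4^3 + b*s4^2 + c*s4 + d = 0) :
    a = 0 ∧ b = 0 ∧ c = 0 ∧ d = 0 := by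
  have k12 : a*(s1^2+s1*s2+s2^2) + b*(s1+s2) + c = 0 := by
    have h : (s1 - s2) * (a*(s1^2+s1*s2+s2^2) + b*(s1+s2) + c) = 0 := by
      linear_combination e1 - e2
    exact (mul_eq_zero.mp h).resolve_left (sub_ne_zero.mpr h12)
  have k13 : a*(s1^2+s1*s3+s3^2) + b*(s1+s3) + c = 0 := by
    have h : (s1 - s3) * (a*(s1^2+s1*s3+s3^2) + b*(s1+s3) + c) = 0 := by
      linear_combination e1 - e3
    exact (mul_eq_zero.mp h).resolve_left (sub_ne_zero.mpr h13)
  have k14 : a*(s1^2+s1*s4+s4^2) + b*(s1+s4) + c = 0 := by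
    have h : (s1 - s4) * (a*(s1^2+s1*s4+s4^2) + b*(s1+s4) + c) = 0 := by
      linear_combination e1 - e4
    exact (mul_eq_zero.mp h).resolve_left (sub_ne_zero.mpr h14)
  have l3 : a*(s1+s2+s3) + b = 0 := by
    have h : (s2 - s3) * (a*(s1+s2+s3) + b) = 0 := by linear_combination k12 - k13
    exact (mul_eq_zero.mp h).resolve_left (sub_ne_zero.mpr h23)
  have l4 : a*(s1+s2+s4) + b = 0 := by
    have h : (s2 - s4) * (a*(s1+s2+s4) + b) = 0 := by linear_combination k12 - k14
    exact (mul_eq_zero.mp h).resolve_left (sub_ne_zero.mpr h24)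
  have ha : a = 0 := by
    have h : (s3 - s4) * a = 0 := by linear_combination l3 - l4
    exact (mul_eq_zero.mp h).resolve_left (sub_ne_zero.mpr h34)
  have hb : b = 0 := by linear_combination l3 - (s1+s2+s3)*ha
  have hc : c = 0 := by linear_combination k12 - (s1^2+s1*s2+s2^2)*ha - (s1+s2)*hb
  have hd : d = 0 := by linear_combination e1 - s1^3*ha - s1^2*hb - s1*hc
  exact ⟨ha, hb, hc, hd⟩

set_option maxHeartbeats 1600000 in
/-- For the depressed quartic s⁴+As²+Bs+C with B < 0, exactly two real roots and one
conjugate pair, and w* a real root of the resolvent cubic: R⁺ > 0,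
R⁻ + 2B/√R⁺ < 0, and the upper-half-plane root has imaginary part
(1/2)√(-R⁻ - 2B/√R⁺). -/
theorem stmt19 (A B C : ℝ) (hB : B < 0) (w : ℝ)
    (hw : (2 * w - A) * (w ^ 2 - C) - B ^ 2 / 4 = 0)
    (Rp Rm : ℝ) (hRp : Rp = 2 * w - A) (hRm : Rm = -2 * w - A)
    (r₁ r₂ : ℝ) (hr : r₁ ≠ r₂) (ζ : ℂ) (hζ : 0 < ζ.im)
    (hroots : ∀ s : ℂ, s ^ 4 + (A : ℂ) * s ^ 2 + (B : ℂ) * s + (C : ℂ) = 0 ↔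
      s = (r₁ : ℂ) ∨ s = (r₂ : ℂ) ∨ s = ζ ∨ s = (starRingEnd ℂ) ζ) :
    0 < Rp ∧ Rm + 2 * B / Real.sqrt Rp < 0 ∧
      ζ.im = (1 / 2) * Real.sqrt (-Rm - 2 * B / Real.sqrt Rp) := by
  have h1 : ((r₁:ℝ):ℂ)^4 + (A:ℂ)*((r₁:ℝ):ℂ)^2 + (B:ℂ)*((r₁:ℝ):ℂ) + (C:ℂ) = 0 := (hroots _).mpr (Or.inl rfl)
  have h2 : ((r₂:ℝ):ℂ)^4 + (A:ℂ)*((r₂:ℝ):ℂ)^2 + (B:ℂ)*((r₂:ℝ):ℂ) + (C:ℂ) = 0 :=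
    (hroots _).mpr (Or.inr (Or.inl rfl))
  have h3 : ζ^4 + (A:ℂ)*ζ^2 + (B:ℂ)*ζ + (C:ℂ) = 0 :=
    (hroots _).mpr (Or.inr (Or.inr (Or.inl rfl)))
  have h4 : ((starRingEnd ℂ) ζ)^4 + (A:ℂ)*((starRingEnd ℂ) ζ)^2 + (B:ℂ)*((starRingEnd ℂ) ζ) + (C:ℂ) = 0 :=
    (hroots _).mpr (Or.inr (Or.inr (Or.inr rfl)))
  have d12 : ((r₁:ℝ):ℂ) ≠ ((r₂:ℝ):ℂ) := by exact_mod_cast hr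
  have d13 : ((r₁:ℝ):ℂ) ≠ ζ := by
    intro h; rw [← h] at hζ; simp at hζ
  have d14 : ((r₁:ℝ):ℂ) ≠ ((starRingEnd ℂ) ζ) := by
    intro h
    have h' := congrArg Complex.im h
    simp at h'
    linarith
  have d23 : ((r₂:ℝ):ℂ) ≠ ζ := by
    intro h; rw [← h] at hζ; simp at hζ
  have d24 : ((r₂:ℝ):ℂ) ≠ ((starRingEnd ℂ) ζ) := by
    intro h
    have h' := congrArg Complex.im h
    simp at h'
    linarith
  have d34 : ζ ≠ ((starRingEnd ℂ) ζ) := by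
    intro h
    have h' := congrArg Complex.im h
    simp at h'
    linarith
  have f1 : (((r₁:ℝ):ℂ)+((r₂:ℝ):ℂ)+ζ+((starRingEnd ℂ) ζ))*((r₁:ℝ):ℂ)^3 + ((A:ℂ) - (((r₁:ℝ):ℂ)*((r₂:ℝ):ℂ)+((r₁:ℝ):ℂ)*ζ+((r₁:ℝ):ℂ)*((starRingEnd ℂ) ζ)+((r₂:ℝ):ℂ)*ζ+((r₂:ℝ):ℂ)*((starRingEnd ℂ) ζ)+ζ*((starRingEnd ℂ) ζ)))*((r₁:ℝ):ℂ)^2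
      + ((B:ℂ) + (((r₁:ℝ):ℂ)*((r₂:ℝ):ℂ)*ζ+((r₁:ℝ):ℂ)*((r₂:ℝ):ℂ)*((starRingEnd ℂ) ζ)+((r₁:ℝ):ℂ)*ζ*((starRingEnd ℂ) ζ)+((r₂:ℝ):ℂ)*ζ*((starRingEnd ℂ) ζ)))*((r₁:ℝ):ℂ) + ((C:ℂ) - ((r₁:ℝ):ℂ)*((r₂:ℝ):ℂ)*ζ*((starRingEnd ℂ) ζ)) = 0 := by linear_combination h1
  have f2 : (((r₁:ℝ):ℂ)+((r₂:ℝ):ℂ)+ζ+((starRingEnd ℂ) ζ))*((r₂:ℝ):ℂ)^3 + ((A:ℂ) - (((r₁:ℝ):ℂ)*((r₂:ℝ):ℂ)+((r₁:ℝ):ℂ)*ζ+((r₁:ℝ):ℂ)*((starRingEnd ℂ) ζ)+((r₂:ℝ):ℂ)*ζ+((r₂:ℝ):ℂ)*((starRingEnd ℂ) ζ)+ζ*((starRingEnd ℂ) ζ)))*((r₂:ℝ):ℂ)^2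
      + ((B:ℂ) + (((r₁:ℝ):ℂ)*((r₂:ℝ):ℂ)*ζ+((r₁:ℝ):ℂ)*((r₂:ℝ):ℂ)*((starRingEnd ℂ) ζ)+((r₁:ℝ):ℂ)*ζ*((starRingEnd ℂ) ζ)+((r₂:ℝ):ℂ)*ζ*((starRingEnd ℂ) ζ)))*((r₂:ℝ):ℂ) + ((C:ℂ) - ((r₁:ℝ):ℂ)*((r₂:ℝ):ℂ)*ζ*((starRingEnd ℂ) ζ)) = 0 := by linear_combination h2
  have f3 : (((r₁:ℝ):ℂ)+((r₂:ℝ):ℂ)+ζ+((starRingEnd ℂ) ζ))*ζ^3 + ((A:ℂ) - (((r₁:ℝ):ℂ)*((r₂:ℝ):ℂ)+((r₁:ℝ):ℂ)*ζ+((r₁:ℝ):ℂ)*((starRingEnd ℂ) ζ)+((r₂:ℝ):ℂ)*ζ+((r₂:ℝ):ℂ)*((starRingEnd ℂ) ζ)+ζ*((starRingEnd ℂ) ζ)))*ζ^2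
      + ((B:ℂ) + (((r₁:ℝ):ℂ)*((r₂:ℝ):ℂ)*ζ+((r₁:ℝ):ℂ)*((r₂:ℝ):ℂ)*((starRingEnd ℂ) ζ)+((r₁:ℝ):ℂ)*ζ*((starRingEnd ℂ) ζ)+((r₂:ℝ):ℂ)*ζ*((starRingEnd ℂ) ζ)))*ζ + ((C:ℂ) - ((r₁:ℝ):ℂ)*((r₂:ℝ):ℂ)*ζ*((starRingEnd ℂ) ζ)) = 0 := by linear_combination h3
  have f4 : (((r₁:ℝ):ℂ)+((r₂:ℝ):ℂ)+ζ+((starRingEnd ℂ) ζ))*((starRingEnd ℂ) ζ)^3 + ((A:ℂ) - (((r₁:ℝ):ℂ)*((r₂:ℝ):ℂ)+((r₁:ℝ):ℂ)*ζ+((r₁:ℝ):ℂ)*((starRingEnd ℂ) ζ)+((r₂:ℝ):ℂ)*ζ+((r₂:ℝ):ℂ)*((starRingEnd ℂ) ζ)+ζ*((starRingEnd ℂ) ζ)))*((starRingEnd ℂ) ζ)^2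
      + ((B:ℂ) + (((r₁:ℝ):ℂ)*((r₂:ℝ):ℂ)*ζ+((r₁:ℝ):ℂ)*((r₂:ℝ):ℂ)*((starRingEnd ℂ) ζ)+((r₁:ℝ):ℂ)*ζ*((starRingEnd ℂ) ζ)+((r₂:ℝ):ℂ)*ζ*((starRingEnd ℂ) ζ)))*((starRingEnd ℂ) ζ) + ((C:ℂ) - ((r₁:ℝ):ℂ)*((r₂:ℝ):ℂ)*ζ*((starRingEnd ℂ) ζ)) = 0 := by linear_combination h4
  obtain ⟨ga, gb, gc, gd⟩ := cubic_zero4 d12 d13 d14 d23 d24 d34 f1 f2 f3 f4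
  have hs : ζ + ((starRingEnd ℂ) ζ) = 2*((ζ.re:ℝ):ℂ) := by
    rw [Complex.add_conj]; push_cast; ring
  have hp : ζ * ((starRingEnd ℂ) ζ) = ((ζ.re:ℝ):ℂ)^2 + ((ζ.im:ℝ):ℂ)^2 := by
    rw [Complex.mul_conj, Complex.normSq_apply]; push_cast; ring
  have hx : r₁ + r₂ + 2*ζ.re = 0 := by
    have h : ((r₁ + r₂ + 2*ζ.re : ℝ) : ℂ) = 0 := by
      push_cast; linear_combination ga - hs
    exact_mod_cast h
  have hA : A = r₁*r₂ + (r₁+r₂)*(2*ζ.re) + (ζ.re^2+ζ.im^2) := by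
    have h : ((A : ℝ) : ℂ) = ((r₁*r₂ + (r₁+r₂)*(2*ζ.re) + (ζ.re^2+ζ.im^2) : ℝ) : ℂ) := by
      push_cast
      linear_combination gb + (((r₁:ℝ):ℂ)+((r₂:ℝ):ℂ))*hs + hp
    exact_mod_cast h
  have hBv : B = -(r₁*r₂*(2*ζ.re) + (r₁+r₂)*(ζ.re^2+ζ.im^2)) := by
    have h : ((B : ℝ) : ℂ) = ((-(r₁*r₂*(2*ζ.re) + (r₁+r₂)*(ζ.re^2+ζ.im^2)) : ℝ) : ℂ) := by
      push_cast
      linear_combination gc - ((r₁:ℝ):ℂ)*((r₂:ℝ):ℂ)*hs - (((r₁:ℝ):ℂ)+((r₂:ℝ):ℂ))*hp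
    exact_mod_cast h
  have hCv : C = r₁*r₂*(ζ.re^2+ζ.im^2) := by
    have h : ((C : ℝ) : ℂ) = ((r₁*r₂*(ζ.re^2+ζ.im^2) : ℝ) : ℂ) := by
      push_cast
      linear_combination gd + ((r₁:ℝ):ℂ)*((r₂:ℝ):ℂ)*hp
    exact_mod_cast h
  -- pure real algebra from here on
  have hr2 : r₂ = -r₁ - 2*ζ.re := by linarith
  subst hr2
  rw [hA, hBv, hCv] at hw
  have hrx : r₁ + ζ.re ≠ 0 := fun h => hr (by linarith)
  have hne : ζ.im*(r₁+ζ.re) ≠ 0 := mul_ne_zero hζ.ne' hrx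
  have hsq : 0 < (ζ.im*(r₁+ζ.re))^2 :=
    lt_of_le_of_ne (sq_nonneg _) (Ne.symm (pow_ne_zero 2 hne))
  have pos2 : 0 < (w + ζ.re^2)^2 + (ζ.im*(r₁+ζ.re))^2 := by
    nlinarith [sq_nonneg (w + ζ.re^2)]
  have key : 2*w = r₁*(-r₁-2*ζ.re) + (ζ.re^2+ζ.im^2) := by
    have k : (2*w - (r₁*(-r₁-2*ζ.re) + (ζ.re^2+ζ.im^2)))
        * ((w + ζ.re^2)^2 + (ζ.im*(r₁+ζ.re))^2) = 0 := by
      linear_combination hw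
    rcases mul_eq_zero.mp k with h | h
    · linarith
    · exact absurd h (ne_of_gt pos2)
  have hy2 : 0 < ζ.im^2 := pow_pos hζ 2
  have hM : 0 < (r₁+ζ.re)^2 + ζ.im^2 := by nlinarith [sq_nonneg (r₁+ζ.re)]
  have hxneg : ζ.re < 0 := by
    by_contra hcon
    push_neg at hcon
    have hB0 : 0 ≤ B := by
      rw [hBv]; nlinarith [mul_nonneg hcon hM.le]
    linarith
  have hRp2 : Rp = (-2*ζ.re)^2 := by
    rw [hRp, hA]; linear_combination key
  have h2x : (0:ℝ) < -2*ζ.re := by linarith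
  have hRppos : 0 < Rp := by rw [hRp2]; positivity
  have hsqrt : Real.sqrt Rp = -2*ζ.re := by
    rw [hRp2, Real.sqrt_sq h2x.le]
  have hxne : ζ.re ≠ 0 := ne_of_lt hxneg
  have hdiv : 2 * B / Real.sqrt Rp = 2*(r₁*(-r₁-2*ζ.re) - (ζ.re^2+ζ.im^2)) := by
    rw [hsqrt, hBv]
    field_simp
    ring
  have hsum : Rm + 2 * B / Real.sqrt Rp = -(2*ζ.im)^2 := by
    rw [hRm, hA, hdiv]; linear_combination -key
  refine ⟨hRppos, ?_, ?_⟩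
  · rw [hsum]; nlinarith [sq_nonneg (2*ζ.im)]
  · have h4s : -Rm - 2 * B / Real.sqrt Rp = (2*ζ.im)^2 := by linarith
    rw [h4s, Real.sqrt_sq (by linarith : (0:ℝ) ≤ 2*ζ.im)]
    ring
end
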